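/- arXiv:2105.06935 — 2 statements merged into one kernel-verified Lean document; each statement's English description precedes it below -/
import Mathlib

section
/- Let m ∈ ℕ, let n = 2m+1, and let z ∈ ℕ with 0 ≤ z < 2^n. Then Σ_{x=0}^{2^n-1} i^{w(x)} (-1)^{z·x} = (-1)^{w(z)} · i^{m+w(z)} · 2^m · (1+i), where the sum is taken in ℂ. -/
open Finset

/-- Hamming weight of a natural number: number of 1s in its binary representation. -/
def hw (x : ℕ) : ℕ := (Nat.digits 2 x).sum

/-- The `j`-th bit of `z`, as a natural number in `{0,1}`. -/
def nbit (z j : ℕ) : ℕ := if z.testBit j then 1 else 0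

/-- Partial bitwise dot product `∑_{j=0}^{n-1} z_j x_j`. -/
def ndot (n z x : ℕ) : ℕ := ∑ j ∈ Finset.range n, nbit z j * nbit x j

/-!
Splitting `x < 2 ^ (n + 1)` by its lowest bit shows that the sum factors over the bits:
it equals `∏ j < n, (1 + i (-1)^{z_j})`. Each factor is `(1 + i) (-i)^{z_j}`, so the product is
`(1 + i)^n (-i)^{w(z)}`, and for `n = 2m + 1` one uses `(1 + i)^2 = 2i`.
-/

theorem sum_range_two_mul {M : Type*} [AddCommMonoid M] (N : ℕ) (f : ℕ → M) :
    ∑ x ∈ range (2 * N), f x = ∑ q ∈ range N, (f (2 * q) + f (2 * q + 1)) := by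
  induction N with
  | zero => simp
  | succ N ih =>
    rw [Nat.mul_succ, sum_range_succ, sum_range_succ, ih, sum_range_succ, add_assoc]

theorem hw_eq_mod_two_add_hw_div_two (x : ℕ) : hw x = x % 2 + hw (x / 2) := by
  rcases Nat.eq_zero_or_pos x with rfl | hx
  · simp [hw]
  · rw [hw, Nat.digits_def' one_lt_two hx, List.sum_cons, hw]

theorem hw_two_mul (q : ℕ) : hw (2 * q) = hw q := by
  rw [hw_eq_mod_two_add_hw_div_two, Nat.mul_mod_right, Nat.mul_div_cancel_left q two_pos,
    zero_add]

theorem hw_two_mul_add_one (q : ℕ) : hw (2 * q + 1) = hw q + 1 := by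
  rw [hw_eq_mod_two_add_hw_div_two, add_comm]
  congr 2 <;> omega

theorem nbit_zero (x : ℕ) : nbit x 0 = x % 2 := by
  rcases Nat.mod_two_eq_zero_or_one x with h | h <;> simp [nbit, Nat.testBit_zero, h]

theorem nbit_succ (x j : ℕ) : nbit x (j + 1) = nbit (x / 2) j := by
  simp [nbit, Nat.testBit_succ]

theorem ndot_succ (n z x : ℕ) :
    ndot (n + 1) z x = nbit z 0 * nbit x 0 + ndot n (z / 2) (x / 2) := by
  rw [ndot, sum_range_succ', add_comm]
  simp only [nbit_succ, ndot]

theorem hw_eq_sum_nbit {n z : ℕ} (hz : z < 2 ^ n) : hw z = ∑ j ∈ range n, nbit z j := by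
  induction n generalizing z with
  | zero =>
    obtain rfl : z = 0 := by simpa using hz
    simp [hw]
  | succ n ih =>
    rw [sum_range_succ', hw_eq_mod_two_add_hw_div_two, ih (by omega), nbit_zero, add_comm]
    simp only [nbit_succ]

theorem sum_pow_hw_mul_pow_ndot {R : Type*} [CommSemiring R] (a s : R) (n z : ℕ) :
    ∑ x ∈ range (2 ^ n), a ^ hw x * s ^ ndot n z x = ∏ j ∈ range n, (1 + a * s ^ nbit z j) := by
  induction n generalizing z with
  | zero => simp [hw, ndot]
  | succ n ih =>
    have split_low_bit : ∀ q ∈ range (2 ^ n),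
        a ^ hw (2 * q) * s ^ ndot (n + 1) z (2 * q) +
          a ^ hw (2 * q + 1) * s ^ ndot (n + 1) z (2 * q + 1) =
        (1 + a * s ^ nbit z 0) * (a ^ hw q * s ^ ndot n (z / 2) q) := by
      intro q _
      have h0 : nbit (2 * q) 0 = 0 := by rw [nbit_zero]; omega
      have h1 : nbit (2 * q + 1) 0 = 1 := by rw [nbit_zero]; omega
      have hq0 : 2 * q / 2 = q := by omega
      have hq1 : (2 * q + 1) / 2 = q := by omega
      rw [hw_two_mul, hw_two_mul_add_one, ndot_succ, ndot_succ, h0, h1, hq0, hq1]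
      ring
    rw [pow_succ', sum_range_two_mul, sum_congr rfl split_low_bit, ← mul_sum, ih,
      prod_range_succ' _ n]
    simp only [nbit_succ]
    ring

theorem one_add_I_mul_neg_one_pow_nbit (z j : ℕ) :
    1 + Complex.I * (-1) ^ nbit z j = (1 + Complex.I) * (-Complex.I) ^ nbit z j := by
  unfold nbit
  split
  · linear_combination Complex.I_sq
  · ring

theorem stmt_3 (m : ℕ) (z : ℕ) (hz : z < 2 ^ (2 * m + 1)) :
    ∑ x ∈ Finset.range (2 ^ (2 * m + 1)), Complex.I ^ hw x * (-1) ^ ndot (2 * m + 1) z x =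
      (-1) ^ hw z * Complex.I ^ (m + hw z) * 2 ^ m * (1 + Complex.I) := by
  have one_add_I_sq : (1 + Complex.I) ^ 2 = 2 * Complex.I := by
    linear_combination Complex.I_sq
  rw [sum_pow_hw_mul_pow_ndot, prod_congr rfl fun j _ => one_add_I_mul_neg_one_pow_nbit z j,
    prod_mul_distrib, prod_const, card_range, prod_pow_eq_pow_sum, ← hw_eq_sum_nbit hz,
    pow_succ, pow_mul, one_add_I_sq, neg_eq_neg_one_mul, mul_pow, mul_pow, pow_add]
  ring
end

section
/- Let m ∈ ℕ, let n = 2m+1, let H = (1/√2)·[[1,1],[1,-1]] and S = [[1,0],[0,i]]. Then for every z with 0 ≤ z < 2^n, the (z,0)-entry of H^{⊗n} S^{⊗n} H^{⊗n} equals (-1)^{w(z)} · i^{m+w(z)} · (1+i) / 2^{m+1}; in particular, in the superposition H^{⊗n} S^{⊗n} H^{⊗n} |0⟩^{⊗n} every basis state |z⟩ has amplitude of modulus 2^{-n/2}, and the amplitude depends on z only through w(z). -/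
open Finset

/-- The single-qubit phase gate `S = [[1,0],[0,i]]`. -/
noncomputable def Sgate : Matrix (Fin 2) (Fin 2) ℂ := !![1, 0; 0, Complex.I]

/-- The single-qubit Hadamard gate `H = (1/√2)·[[1,1],[1,-1]]`. -/
noncomputable def Hgate : Matrix (Fin 2) (Fin 2) ℂ :=
  ((Real.sqrt 2 : ℂ))⁻¹ • !![1, 1; 1, -1]

/-- The `n`-fold Kronecker power of a `2 × 2` complex matrix, a `2^n × 2^n` matrix whose
rows and columns are indexed by natural numbers `0 ≤ x < 2^n` via their binary
representations: the entry at `(x, y)` is `∏_{j=0}^{n-1} M (x_j) (y_j)`. -/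
noncomputable def kronPow (n : ℕ) (M : Matrix (Fin 2) (Fin 2) ℂ) :
    Matrix (Fin (2 ^ n)) (Fin (2 ^ n)) ℂ :=
  Matrix.of fun x y => ∏ j ∈ Finset.range n,
    M (if (x : ℕ).testBit j then 1 else 0) (if (y : ℕ).testBit j then 1 else 0)

/-! Kronecker powers multiply entrywise over bits, so `H^{⊗n} S^{⊗n} H^{⊗n} = (HSH)^{⊗n}` with
`HSH = ½·[[1+i, 1-i], [1-i, 1+i]]`. The `(z, 0)` entry of `(HSH)^{⊗n}` is then
`((1-i)/2)^{w(z)} · ((1+i)/2)^{n-w(z)}`, and the closed form follows from `(1-i)/2 = -i·(1+i)/2`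
and `((1+i)/2)² = i/2`; both factors have modulus `1/√2`. -/

open Complex

lemma testBit_finFunctionFinEquiv {n : ℕ} (f : Fin n → Fin 2) (j : Fin n) :
    (if (finFunctionFinEquiv f : ℕ).testBit j then (1 : Fin 2) else 0) = f j := by
  have hdigit : (finFunctionFinEquiv f : ℕ) / 2 ^ (j : ℕ) % 2 = f j := by
    rw [← finFunctionFinEquiv_symm_apply_val, finFunctionFinEquiv.symm_apply_apply f]
  rw [Nat.testBit_eq_decide_div_mod_eq, hdigit]
  rcases Fin.exists_fin_two.mp ⟨f j, rfl⟩ with h | h <;> simp [h]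

lemma kronPow_mul (n : ℕ) (A B : Matrix (Fin 2) (Fin 2) ℂ) :
    kronPow n A * kronPow n B = kronPow n (A * B) := by
  ext x y
  let bit (k : ℕ) (j : ℕ) : Fin 2 := if k.testBit j then 1 else 0
  calc (kronPow n A * kronPow n B) x y
      = ∑ f : Fin n → Fin 2, ∏ j : Fin n, A (bit x j) (f j) * B (f j) (bit y j) := by
        rw [Matrix.mul_apply, ← Equiv.sum_comp (finFunctionFinEquiv (m := 2) (n := n))]
        refine Finset.sum_congr rfl fun f _ => ?_
        simp only [kronPow, Matrix.of_apply, ← Fin.prod_univ_eq_prod_range (fun j => A _ _),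
          ← Fin.prod_univ_eq_prod_range (fun j => B _ _), ← Finset.prod_mul_distrib,
          testBit_finFunctionFinEquiv]
        rfl
    _ = ∏ j : Fin n, ∑ b : Fin 2, A (bit x j) b * B b (bit y j) := by
        rw [Finset.prod_univ_sum, Fintype.piFinset_univ]
    _ = kronPow n (A * B) x y := by
        simp only [kronPow, Matrix.of_apply, Matrix.mul_apply, Fin.prod_univ_eq_prod_range
          (fun j => ∑ b : Fin 2, A (bit x j) b * B b (bit y j))]
        rfl

lemma card_filter_testBit_eq_hw {n z : ℕ} (hz : z < 2 ^ n) :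
    #{j ∈ range n | z.testBit j} = hw z := by
  induction n generalizing z with
  | zero => simp [Nat.lt_one_iff.mp (by simpa using hz), hw]
  | succ n ih =>
    rcases Nat.eq_zero_or_pos z with rfl | hpos
    · simp [hw]
    have hdigits : hw z = z % 2 + hw (z / 2) := by
      rw [hw, Nat.digits_def' (by norm_num) hpos, List.sum_cons, hw]
    rw [card_filter, sum_range_succ', hdigits, ← ih (by omega), card_filter, add_comm]
    simp only [Nat.testBit_succ, Nat.testBit_zero, decide_eq_true_eq]
    split <;> omega

lemma kronPow_apply_zero_right (n : ℕ) (M : Matrix (Fin 2) (Fin 2) ℂ) (z : Fin (2 ^ n)) :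
    kronPow n M z ⟨0, Nat.two_pow_pos n⟩ = M 1 0 ^ hw z * M 0 0 ^ (n - hw z) := by
  have hcard := card_filter_testBit_eq_hw z.isLt
  have hcard_not : #{j ∈ range n | ¬ (z : ℕ).testBit j} = n - hw z := by
    have := card_filter_add_card_filter_not (s := range n) (p := fun j => (z : ℕ).testBit j)
    rw [card_range] at this
    omega
  calc kronPow n M z ⟨0, Nat.two_pow_pos n⟩
      = ∏ j ∈ range n, if (z : ℕ).testBit j then M 1 0 else M 0 0 := by
        rw [kronPow, Matrix.of_apply]
        refine prod_congr rfl fun j _ => ?_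
        simp only [Nat.zero_testBit]
        split <;> rfl
    _ = M 1 0 ^ hw z * M 0 0 ^ (n - hw z) := by
        rw [prod_ite, prod_const, prod_const, hcard, hcard_not]

lemma Hgate_mul_Sgate_mul_Hgate :
    Hgate * Sgate * Hgate = !![(1 + I) / 2, (1 - I) / 2; (1 - I) / 2, (1 + I) / 2] := by
  have hsqrt : ((Real.sqrt 2 : ℂ))⁻¹ * ((Real.sqrt 2 : ℂ))⁻¹ = (2 : ℂ)⁻¹ := by
    rw [← mul_inv, ← ofReal_mul, Real.mul_self_sqrt zero_le_two, ofReal_ofNat]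
  rw [Hgate, Sgate, Matrix.smul_mul, Matrix.mul_smul, Matrix.smul_mul, smul_smul, hsqrt]
  ext i j
  fin_cases i <;> fin_cases j <;> simp <;> ring

lemma norm_one_add_I_div_two : ‖(1 + I) / 2‖ = (Real.sqrt 2)⁻¹ := by
  have hsqrt : Real.sqrt 2 * Real.sqrt 2 = 2 := Real.mul_self_sqrt zero_le_two
  rw [norm_div, norm_eq_sqrt_sq_add_sq, Complex.norm_ofNat]
  simp only [add_re, add_im, one_re, one_im, I_re, I_im]
  field_simp
  norm_num [hsqrt]

lemma norm_one_sub_I_div_two : ‖(1 - I) / 2‖ = (Real.sqrt 2)⁻¹ := by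
  rw [← norm_conj, map_div₀, map_sub, map_one, conj_I, sub_neg_eq_add, map_ofNat,
    norm_one_add_I_div_two]

lemma sqrt_pow_of_nonneg {x : ℝ} (hx : 0 ≤ x) (n : ℕ) :
    Real.sqrt (x ^ n) = Real.sqrt x ^ n := by
  rw [Real.sqrt_eq_iff_eq_sq (by positivity) (by positivity), ← pow_mul, mul_comm, pow_mul,
    Real.sq_sqrt hx]

lemma one_sub_I_div_two_pow_mul_one_add_I_div_two_pow {m w : ℕ} (hw : w ≤ 2 * m + 1) :
    ((1 - I) / 2) ^ w * ((1 + I) / 2) ^ (2 * m + 1 - w) =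
      (-1) ^ w * I ^ (m + w) * (1 + I) / 2 ^ (m + 1) := by
  have hsub : (1 - I) / 2 = -I * ((1 + I) / 2) := by linear_combination (1/2 : ℂ) * I_sq
  have hsq : ((1 + I) / 2) ^ 2 = I / 2 := by linear_combination (1/4 : ℂ) * I_sq
  calc ((1 - I) / 2) ^ w * ((1 + I) / 2) ^ (2 * m + 1 - w)
      = (-I) ^ w * (((1 + I) / 2) ^ 2) ^ m * ((1 + I) / 2) := by
        rw [hsub, mul_pow, mul_assoc, ← pow_add, Nat.add_sub_cancel' hw, pow_succ,
          pow_mul, mul_assoc]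
    _ = (-1) ^ w * I ^ (m + w) * (1 + I) / 2 ^ (m + 1) := by
        rw [hsq, div_pow, neg_pow, pow_add, pow_succ]
        ring

lemma norm_one_sub_I_div_two_pow_mul_one_add_I_div_two_pow {n w : ℕ} (hw : w ≤ n) :
    ‖((1 - I) / 2) ^ w * ((1 + I) / 2) ^ (n - w)‖ = (Real.sqrt (2 ^ n))⁻¹ := by
  rw [norm_mul, norm_pow, norm_pow, norm_one_sub_I_div_two, norm_one_add_I_div_two, ← pow_add,
    Nat.add_sub_cancel' hw, inv_pow, sqrt_pow_of_nonneg zero_le_two]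

theorem stmt_9 (m : ℕ) (z : Fin (2 ^ (2 * m + 1))) :
    (kronPow (2 * m + 1) Hgate * kronPow (2 * m + 1) Sgate * kronPow (2 * m + 1) Hgate)
        z ⟨0, by positivity⟩ =
      (-1) ^ hw (z : ℕ) * Complex.I ^ (m + hw (z : ℕ)) * (1 + Complex.I) / 2 ^ (m + 1) ∧
    ‖(kronPow (2 * m + 1) Hgate * kronPow (2 * m + 1) Sgate * kronPow (2 * m + 1) Hgate)
          z ⟨0, by positivity⟩‖ = (Real.sqrt (2 ^ (2 * m + 1)))⁻¹ := by
  have hw_le : hw z ≤ 2 * m + 1 := by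
    rw [← card_filter_testBit_eq_hw z.isLt]
    exact (card_filter_le _ _).trans (card_range _).le
  have hentry : (kronPow (2 * m + 1) Hgate * kronPow (2 * m + 1) Sgate *
      kronPow (2 * m + 1) Hgate) z ⟨0, by positivity⟩ =
      ((1 - I) / 2) ^ hw z * ((1 + I) / 2) ^ (2 * m + 1 - hw z) := by
    rw [kronPow_mul, kronPow_mul, Hgate_mul_Sgate_mul_Hgate, kronPow_apply_zero_right]
    rfl
  rw [hentry]
  exact ⟨one_sub_I_div_two_pow_mul_one_add_I_div_two_pow hw_le,
    norm_one_sub_I_div_two_pow_mul_one_add_I_div_two_pow hw_le⟩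
end
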